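/- arXiv:1707.07175 — 3 statements merged into one kernel-verified Lean document; each statement's English description precedes it below -/
import Mathlib

section
/- The positive recurrence condition pFe < pDe for the QBD process Q^(EVFB) is equivalent to Cμ < λ(1 − P_nslb(N,S)), where p is the stationary distribution of A = F + L + D. -/
/-!
Multiplying the stationarity equation `p A = 0` on the right by the level vector `n ↦ n`
turns it into the flow-balance identity: `A` maps the level vector to the drift `b n - d n`
of the birth–death chain, so the mean birth rate `λ (1 - p_N)` equals the mean death rate
`p D e`. Since `p` sums to one, `p F e = C μ`.
-/

open Matrix

section BirthDeath

variable {R : Type*} [CommRing R] {N : ℕ} (b d : ℕ → R)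

def birthDeathGenerator : Matrix (Fin (N + 1)) (Fin (N + 1)) R :=
  Matrix.of fun i j =>
    if (i : ℕ) + 1 = j then b i
    else if (j : ℕ) + 1 = i then d i
    else if i = j then -(b i + d i)
    else 0

variable {b d}

theorem birthDeathGenerator_apply_mul_coe (i j : Fin (N + 1)) :
    birthDeathGenerator b d i j * (j : R) =
      (if (i : ℕ) + 1 = j then b i * j else 0) + (if (j : ℕ) + 1 = i then d i * j else 0)
        - (if i = j then (b i + d i) * i else 0) := by
  unfold birthDeathGenerator
  rw [Matrix.of_apply]
  split_ifs <;> subst_vars <;> first | (exfalso; omega) | ring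

theorem birthDeathGenerator_mulVec_coe (hbN : b N = 0) (hd0 : d 0 = 0) :
    birthDeathGenerator (N := N) b d *ᵥ (fun j => (j : R)) =
      fun i : Fin (N + 1) => b i - d i := by
  ext ⟨k, hk⟩
  have hup :
      (∑ j ∈ Finset.range (N + 1), if k + 1 = j then b k * j else 0) = b k * (k + 1) := by
    rw [Finset.sum_ite_eq]
    split_ifs with h
    · push_cast; ring
    · obtain rfl : k = N := by simp at h; omega
      simp [hbN]
  have hdown :
      (∑ j ∈ Finset.range (N + 1), if j + 1 = k then d k * j else 0) = d k * (k - 1) := by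
    rcases k with _ | k
    · simp [hd0]
    · simp only [add_left_inj, Finset.sum_ite_eq', Finset.mem_range]
      rw [if_pos (by omega)]
      push_cast; ring
  simp only [mulVec, dotProduct, birthDeathGenerator_apply_mul_coe, Finset.sum_sub_distrib,
    Finset.sum_add_distrib, Finset.sum_ite_eq, Finset.mem_univ, if_true]
  rw [Fin.sum_univ_eq_sum_range (fun j => if k + 1 = j then b k * j else 0),
    Fin.sum_univ_eq_sum_range (fun j => if j + 1 = k then d k * j else 0), hup, hdown]
  ring

theorem sum_mul_birth_eq_sum_mul_death (hbN : b N = 0) (hd0 : d 0 = 0) {p : Fin (N + 1) → R}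
    (hp : p ᵥ* birthDeathGenerator b d = 0) : ∑ i, p i * b i = ∑ i, p i * d i := by
  have h := congrArg (· ⬝ᵥ fun j : Fin (N + 1) => (j : R)) hp
  simp only [← dotProduct_mulVec, birthDeathGenerator_mulVec_coe hbN hd0, zero_dotProduct] at h
  simpa only [dotProduct, mul_sub, Finset.sum_sub_distrib, sub_eq_zero] using h

end BirthDeath

theorem Fin.sum_mul_ite_val_lt {R : Type*} [CommRing R] {N : ℕ} (p : Fin (N + 1) → R) (c : R) :
    ∑ i : Fin (N + 1), p i * (if (i : ℕ) < N then c else 0) =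
      c * (∑ i, p i - p (Fin.last N)) := by
  simp [Fin.sum_univ_castSucc, Finset.mul_sum, mul_comm]

theorem positive_recurrence_condition_iff_general (N S : ℕ)
    (lam nu mu C : ℝ)
    (A : Matrix (Fin (N + 1)) (Fin (N + 1)) ℝ)
    (hA : A = Matrix.of (fun i j : Fin (N + 1) =>
        if (i : ℕ) + 1 = (j : ℕ) then lam
        else if (j : ℕ) + 1 = (i : ℕ) then (min (i : ℕ) S : ℝ) * nu
        else if i = j then
          -((if (i : ℕ) < N then lam else 0) + (min (i : ℕ) S : ℝ) * nu)
        else 0))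
    (p : Fin (N + 1) → ℝ)
    (hstat : Matrix.vecMul p A = 0) (hsum : ∑ n, p n = 1) :
    (∑ n, p n * (C * mu)) < (∑ n, p n * ((min (n : ℕ) S : ℝ) * nu)) ↔
      C * mu < lam * (1 - p (Fin.last N)) := by
  let b : ℕ → ℝ := fun n => if n < N then lam else 0
  let d : ℕ → ℝ := fun n => (min n S : ℝ) * nu
  have hA_eq : A = birthDeathGenerator b d := by
    rw [hA]
    ext i j
    simp only [birthDeathGenerator, of_apply, b, d]
    split_ifs <;> first | rfl | omega
  have hbalance := sum_mul_birth_eq_sum_mul_death (b := b) (d := d) (by simp [b]) (by simp [d])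
    (hA_eq ▸ hstat)
  have hbirth : ∑ n, p n * b n = lam * (1 - p (Fin.last N)) := by
    rw [Fin.sum_mul_ite_val_lt, hsum]
  rw [← Finset.sum_mul, hsum, one_mul, ← hbirth, hbalance]

theorem positive_recurrence_condition_iff (N S : ℕ) (hN : 1 ≤ N) (hS : 1 ≤ S)
    (lam nu mu C : ℝ) (hlam : 0 < lam) (hnu : 0 < nu) (hmu : 0 < mu) (hC : 0 < C)
    (A : Matrix (Fin (N + 1)) (Fin (N + 1)) ℝ)
    (hA : A = Matrix.of (fun i j : Fin (N + 1) =>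
        if (i : ℕ) + 1 = (j : ℕ) then lam
        else if (j : ℕ) + 1 = (i : ℕ) then (min (i : ℕ) S : ℝ) * nu
        else if i = j then
          -((if (i : ℕ) < N then lam else 0) + (min (i : ℕ) S : ℝ) * nu)
        else 0))
    (p : Fin (N + 1) → ℝ) (hpos : ∀ n, 0 ≤ p n)
    (hstat : Matrix.vecMul p A = 0) (hsum : ∑ n, p n = 1) :
    (∑ n, p n * (C * mu)) < (∑ n, p n * ((min (n : ℕ) S : ℝ) * nu)) ↔
      C * mu < lam * (1 - p (Fin.last N)) :=
  positive_recurrence_condition_iff_general N S lam nu mu C A hA p hstat hsum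
end

section
/- The blocking probability of the M/M/S/N queue is strictly decreasing in S for fixed N: if 1 ≤ S < S' ≤ N then P_nslb(N, S') < P_nslb(N, S). -/
/-!
With `r = λ/ν`, multiplying numerator and denominator by `S^(N-S) S!` writes the blocking
probability as `r^N / ∑_{n ≤ N} r^n ∏_{k=n+1}^{N} min(k, S)`. Every factor `min(k, S)` is
nondecreasing in `S`, and for `S < S'` the factor `k = S'` of the `n = 0` term grows strictly,
so the denominator is strictly increasing in `S`.
-/

noncomputable def mmsnP0 (lam nu : ℝ) (N S : ℕ) : ℝ :=
  (∑ n ∈ Finset.range (S + 1), (lam / nu) ^ n / (n.factorial : ℝ)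
    + ((lam / nu) ^ S / (S.factorial : ℝ))
      * ∑ n ∈ Finset.Icc (S + 1) N, (lam / nu) ^ (n - S) / (S : ℝ) ^ (n - S))⁻¹

noncomputable def mmsnPnslb (lam nu : ℝ) (N S : ℕ) : ℝ :=
  (lam / nu) ^ N / ((S : ℝ) ^ (N - S) * (S.factorial : ℝ)) * mmsnP0 lam nu N S

open Finset Nat

theorem Nat.factorial_mul_prod_Ioc {n m : ℕ} (h : n ≤ m) :
    n ! * ∏ k ∈ Ioc n m, k = m ! := by
  induction m, h using Nat.le_induction with
  | base => simp
  | succ m hnm ih => rw [prod_Ioc_succ_top hnm, ← mul_assoc, ih, factorial_succ, mul_comm]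

/-- `min k S` is the total service rate, in units of `ν`, of the `S`-server queue holding
`k` customers. -/
def serviceRateProd (N S n : ℕ) : ℕ := ∏ k ∈ Ioc n N, min k S

section serviceRateProd

variable {N S S' n : ℕ}

theorem serviceRateProd_pos (hS : 1 ≤ S) : 0 < serviceRateProd N S n :=
  prod_pos fun k hk => lt_min (by grind) hS

theorem serviceRateProd_eq_pow_of_le (hSn : S ≤ n) : serviceRateProd N S n = S ^ (N - n) := by
  rw [serviceRateProd, prod_congr rfl fun k hk => min_eq_right (by grind), prod_const,
    Nat.card_Ioc]

theorem factorial_mul_serviceRateProd (hnS : n ≤ S) (hSN : S ≤ N) :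
    n ! * serviceRateProd N S n = S ! * S ^ (N - S) := by
  rw [serviceRateProd, ← prod_Ioc_consecutive _ hnS hSN, ← mul_assoc,
    prod_congr rfl fun k hk => min_eq_left (mem_Ioc.1 hk).2, factorial_mul_prod_Ioc hnS,
    ← serviceRateProd_eq_pow_of_le le_rfl, serviceRateProd]

theorem serviceRateProd_le_of_le (hSS' : S ≤ S') :
    serviceRateProd N S n ≤ serviceRateProd N S' n :=
  prod_le_prod' fun _ _ => min_le_min_left _ hSS'

theorem serviceRateProd_lt_of_lt (hS : 1 ≤ S) (hSS' : S < S') (hnS' : n < S') (hS'N : S' ≤ N) :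
    serviceRateProd N S n < serviceRateProd N S' n :=
  prod_lt_prod (fun k hk => lt_min (by grind) hS) (fun _ _ => min_le_min_left _ hSS'.le)
    ⟨S', mem_Ioc.2 ⟨hnS', hS'N⟩, by simpa using hSS'⟩

end serviceRateProd

noncomputable def mmsnDenom (r : ℝ) (N S : ℕ) : ℝ :=
  ∑ n ∈ range (N + 1), r ^ n * serviceRateProd N S n

theorem mmsnDenom_eq (r : ℝ) {N S : ℕ} (hS : 1 ≤ S) (hSN : S ≤ N) :
    mmsnDenom r N S = (S : ℝ) ^ (N - S) * (S ! : ℝ) *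
      (∑ n ∈ range (S + 1), r ^ n / (n ! : ℝ)
        + (r ^ S / (S ! : ℝ)) * ∑ n ∈ Icc (S + 1) N, r ^ (n - S) / (S : ℝ) ^ (n - S)) := by
  have hS0 : (S : ℝ) ≠ 0 := by positivity
  rw [mmsnDenom, ← sum_range_add_sum_Ico _ (by omega : S + 1 ≤ N + 1), mul_add, mul_sum,
    ← Finset.Ico_add_one_right_eq_Icc, mul_sum, mul_sum]
  congr 1
  · refine sum_congr rfl fun n hn => ?_
    have key : (n ! : ℝ) * serviceRateProd N S n = S ! * (S : ℝ) ^ (N - S) := by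
      exact_mod_cast factorial_mul_serviceRateProd (by grind) hSN
    field_simp
    linear_combination r ^ n * key
  · refine sum_congr rfl fun n hn => ?_
    obtain ⟨hSn, hnN⟩ : S + 1 ≤ n ∧ n < N + 1 := mem_Ico.1 hn
    rw [serviceRateProd_eq_pow_of_le (by omega), Nat.cast_pow,
      ← pow_mul_pow_sub r (by omega : S ≤ n), show N - S = (N - n) + (n - S) by omega, pow_add]
    field_simp

theorem mmsnDenom_pos {r : ℝ} (hr : 0 < r) {N S : ℕ} (hS : 1 ≤ S) : 0 < mmsnDenom r N S :=
  sum_pos (fun n _ => mul_pos (pow_pos hr n) (by exact_mod_cast serviceRateProd_pos hS))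
    nonempty_range_add_one

theorem mmsnDenom_lt_of_lt {r : ℝ} (hr : 0 < r) {N S S' : ℕ} (hS : 1 ≤ S) (hSS' : S < S')
    (hS'N : S' ≤ N) : mmsnDenom r N S < mmsnDenom r N S' :=
  sum_lt_sum
    (fun n _ => mul_le_mul_of_nonneg_left
      (by exact_mod_cast serviceRateProd_le_of_le hSS'.le) (pow_pos hr n).le)
    ⟨0, by simp, mul_lt_mul_of_pos_left
      (by exact_mod_cast serviceRateProd_lt_of_lt hS hSS' (by omega) hS'N) (pow_pos hr 0)⟩

theorem mmsnPnslb_eq_div_mmsnDenom (lam nu : ℝ) {N S : ℕ} (hS : 1 ≤ S) (hSN : S ≤ N) :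
    mmsnPnslb lam nu N S = (lam / nu) ^ N / mmsnDenom (lam / nu) N S := by
  rw [mmsnPnslb, mmsnP0, ← div_eq_mul_inv, div_div, mmsnDenom_eq _ hS hSN]

theorem blocking_prob_strict_anti_in_S (lam nu : ℝ) (hlam : 0 < lam) (hnu : 0 < nu)
    (N S S' : ℕ) (hS : 1 ≤ S) (hSS' : S < S') (hS'N : S' ≤ N) :
    mmsnPnslb lam nu N S' < mmsnPnslb lam nu N S := by
  have hr : 0 < lam / nu := div_pos hlam hnu
  rw [mmsnPnslb_eq_div_mmsnDenom _ _ (hS.trans hSS'.le) hS'N,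
    mmsnPnslb_eq_div_mmsnDenom _ _ hS (hSS'.le.trans hS'N)]
  exact div_lt_div_of_pos_left (pow_pos hr N) (mmsnDenom_pos hr hS)
    (mmsnDenom_lt_of_lt hr hS hSS' hS'N)
end

section
/- The blocking probability of the M/M/S/N queue is strictly decreasing in N for fixed S: if S ≤ N < N' then P_nslb(N', S) < P_nslb(N, S). -/
open Finset

section RatioSequence

variable {w ρ : ℕ → ℝ}

lemma pos_of_succ_eq_mul (hw0 : 0 < w 0) (hρ : ∀ n, 0 < ρ n)
    (hstep : ∀ n, w (n + 1) = w n * ρ n) : ∀ n, 0 < w n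
  | 0 => hw0
  | n + 1 => hstep n ▸ mul_pos (pos_of_succ_eq_mul hw0 hρ hstep n) (hρ n)

lemma sum_range_div_succ_of_ratio (hw : ∀ n, 0 < w n) (hstep : ∀ n, w (n + 1) = w n * ρ n) (N : ℕ) :
    (∑ n ∈ range (N + 2), w n) / w (N + 1) = (∑ n ∈ range (N + 1), w n) / w N / ρ N + 1 := by
  rw [sum_range_succ _ (N + 1), add_div, div_self (hw _).ne', hstep N, div_div]

lemma strictMono_sum_range_div_of_antitone_ratio (hw : ∀ n, 0 < w n) (hρ : ∀ n, 0 < ρ n)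
    (hρ_anti : Antitone ρ) (hstep : ∀ n, w (n + 1) = w n * ρ n) :
    StrictMono fun N => (∑ n ∈ range (N + 1), w n) / w N := by
  set q : ℕ → ℝ := fun N => (∑ n ∈ range (N + 1), w n) / w N
  have hq_pos : ∀ N, 0 < q N := fun N =>
    div_pos (sum_pos (fun n _ => hw n) ⟨0, mem_range.2 N.succ_pos⟩) (hw N)
  have hq_succ : ∀ N, q (N + 1) = q N / ρ N + 1 := sum_range_div_succ_of_ratio hw hstep
  refine strictMono_nat_of_lt_succ fun N => ?_
  induction N with
  | zero =>
    have hq_zero : q 0 = 1 := by simp [q, (hw 0).ne']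
    rw [hq_succ, hq_zero]
    linarith [one_div_pos.2 (hρ 0)]
  | succ N ih =>
    calc q (N + 1) = q N / ρ N + 1 := hq_succ N
      _ < q (N + 1) / ρ N + 1 := by gcongr; exact hρ N
      _ ≤ q (N + 1) / ρ (N + 1) + 1 := by
        gcongr
        · exact (hq_pos _).le
        · exact hρ _
        · exact hρ_anti N.le_succ
      _ = q (N + 1 + 1) := (hq_succ _).symm

lemma strictAnti_div_sum_range_of_antitone_ratio (hw0 : 0 < w 0) (hρ : ∀ n, 0 < ρ n)
    (hρ_anti : Antitone ρ) (hstep : ∀ n, w (n + 1) = w n * ρ n) :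
    StrictAnti fun N => w N / ∑ n ∈ range (N + 1), w n := by
  have hw := pos_of_succ_eq_mul hw0 hρ hstep
  intro a b hab
  dsimp only
  rw [← inv_div _ (w b), ← inv_div _ (w a)]
  exact inv_strictAnti₀ (div_pos (sum_pos (fun n _ => hw n) ⟨0, mem_range.2 a.succ_pos⟩) (hw a))
    (strictMono_sum_range_div_of_antitone_ratio hw hρ hρ_anti hstep hab)

end RatioSequence

section MMSN

/-- The denominator is `∏_{1 ≤ k ≤ n} min(k, S)`. -/
noncomputable def mmsnWeight (r : ℝ) (S n : ℕ) : ℝ :=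
  r ^ n / ((min n S).factorial * (S : ℝ) ^ (n - S))

lemma mmsnWeight_of_le {r : ℝ} {S n : ℕ} (h : n ≤ S) :
    mmsnWeight r S n = r ^ n / n.factorial := by
  simp [mmsnWeight, min_eq_left h, Nat.sub_eq_zero_of_le h]

lemma mmsnWeight_of_ge {r : ℝ} {S n : ℕ} (h : S ≤ n) :
    mmsnWeight r S n = r ^ S / S.factorial * (r ^ (n - S) / (S : ℝ) ^ (n - S)) := by
  rw [mmsnWeight, min_eq_right h, div_mul_div_comm, ← pow_add, Nat.add_sub_cancel' h]

lemma mmsnWeight_succ {r : ℝ} {S : ℕ} (hS : 0 < S) (n : ℕ) :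
    mmsnWeight r S (n + 1) = mmsnWeight r S n * (r / (min (n + 1) S : ℕ)) := by
  rcases lt_or_ge n S with hn | hn
  · rw [mmsnWeight_of_le (n := n + 1) hn, mmsnWeight_of_le hn.le, min_eq_left hn,
      Nat.factorial_succ]
    push_cast
    field_simp
    ring
  · have hS' : (S : ℝ) ≠ 0 := by exact_mod_cast hS.ne'
    rw [mmsnWeight_of_ge (n := n + 1) (by omega), mmsnWeight_of_ge hn, min_eq_right (by omega),
      Nat.sub_add_comm hn]
    field_simp
    ring

lemma mmsnPnslb_eq_weight_div_sum (lam nu : ℝ) {S N : ℕ} (hSN : S ≤ N) :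
    mmsnPnslb lam nu N S =
      mmsnWeight (lam / nu) S N / ∑ n ∈ range (N + 1), mmsnWeight (lam / nu) S n := by
  have hsplit : ∑ n ∈ range (N + 1), mmsnWeight (lam / nu) S n
      = ∑ n ∈ range (S + 1), (lam / nu) ^ n / (n.factorial : ℝ)
        + (lam / nu) ^ S / (S.factorial : ℝ)
          * ∑ n ∈ Icc (S + 1) N, (lam / nu) ^ (n - S) / (S : ℝ) ^ (n - S) := by
    rw [← sum_range_add_sum_Ico _ (by omega : S + 1 ≤ N + 1), Ico_add_one_right_eq_Icc, mul_sum]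
    congr 1
    · exact sum_congr rfl fun n hn => mmsnWeight_of_le (mem_range_succ_iff.1 hn)
    · exact sum_congr rfl fun n hn => mmsnWeight_of_ge (S.le_succ.trans (mem_Icc.1 hn).1)
  rw [mmsnPnslb, mmsnP0, ← hsplit, mmsnWeight, min_eq_right hSN, mul_comm ((S : ℝ) ^ (N - S)),
    ← div_eq_mul_inv]

end MMSN

theorem blocking_prob_strict_anti_in_N (lam nu : ℝ) (hlam : 0 < lam) (hnu : 0 < nu)
    (S N N' : ℕ) (hS : 1 ≤ S) (hSN : S ≤ N) (hNN' : N < N') :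
    mmsnPnslb lam nu N' S < mmsnPnslb lam nu N S := by
  have hr : 0 < lam / nu := div_pos hlam hnu
  have hρ : ∀ n, 0 < lam / nu / (min (n + 1) S : ℕ) := fun n => div_pos hr (by positivity)
  have hρ_anti : Antitone fun n => lam / nu / (min (n + 1) S : ℕ) := fun m n hmn => by
    dsimp only
    gcongr
  rw [mmsnPnslb_eq_weight_div_sum lam nu (hSN.trans hNN'.le),
    mmsnPnslb_eq_weight_div_sum lam nu hSN]
  exact strictAnti_div_sum_range_of_antitone_ratio (by simp [mmsnWeight]) hρ hρ_anti
    (mmsnWeight_succ hS) hNN'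
end
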